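/- Let n ≥ 3 be odd and F a field, and for each m ∈ {0,...,n} let q_m := Σ_{i=0}^{m-1} (-1)^{i+m+1} e_i + Σ_{k=m+1}^{n} (-1)^{k+m} e_k ∈ F^{n+1}. Then there exists a nonzero vector c ∈ F^{n+1} lying in the two-dimensional span of {e_k, q_k} for every k ∈ {0,...,n} if and only if F has characteristic two. Moreover, if char F = 2, then the all-ones vector (1,1,...,1) lies in the span of {e_k, q_k} for every k. -/

import Mathlib

/-- The vector `q_m = Σ_{i<m} (-1)^{i+m+1} e_i + Σ_{k>m} (-1)^{k+m} e_k`. -/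
def moebiusQ (F : Type*) [Field F] (n : ℕ) (m : Fin (n + 1)) : Fin (n + 1) → F :=
  (∑ i ∈ Finset.univ.filter (fun i : Fin (n + 1) => i < m),
      ((-1 : F) ^ ((i : ℕ) + (m : ℕ) + 1)) • (Pi.single i (1 : F) : Fin (n + 1) → F)) +
  (∑ k ∈ Finset.univ.filter (fun k : Fin (n + 1) => m < k),
      ((-1 : F) ^ ((k : ℕ) + (m : ℕ))) • (Pi.single k (1 : F) : Fin (n + 1) → F))

lemma moebiusQ_apply (F : Type*) [Field F] (n : ℕ) (m j : Fin (n+1)) :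
    moebiusQ F n m j =
      if j < m then (-1:F)^((j:ℕ)+(m:ℕ)+1) else if m < j then (-1:F)^((j:ℕ)+(m:ℕ)) else 0 := by
  unfold moebiusQ
  simp only [Pi.add_apply, Finset.sum_apply, Pi.smul_apply, Pi.single_apply, smul_eq_mul,
    mul_ite, mul_one, mul_zero]
  rw [Finset.sum_ite_eq, Finset.sum_ite_eq]
  simp only [Finset.mem_filter, Finset.mem_univ, true_and]
  rcases lt_trichotomy j m with h | h | h
  · simp [h, asymm h, not_lt.mpr h.le]
  · simp [h, lt_irrefl]
  · simp [h, asymm h, not_lt.mpr h.le]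

theorem stmt_9 (F : Type*) [Field F] (n : ℕ) (hn : 3 ≤ n) (hodd : Odd n) :
    ((∃ c : Fin (n + 1) → F, c ≠ 0 ∧ ∀ k : Fin (n + 1),
        c ∈ Submodule.span F
          {(Pi.single k (1 : F) : Fin (n + 1) → F), moebiusQ F n k}) ↔
      ringChar F = 2) ∧
    (ringChar F = 2 → ∀ k : Fin (n + 1),
      (fun _ : Fin (n + 1) => (1 : F)) ∈
        Submodule.span F
          {(Pi.single k (1 : F) : Fin (n + 1) → F), moebiusQ F n k}) := by
  have part2 : ringChar F = 2 → ∀ k : Fin (n + 1),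
      (fun _ : Fin (n + 1) => (1 : F)) ∈
        Submodule.span F
          {(Pi.single k (1 : F) : Fin (n + 1) → F), moebiusQ F n k} := by
    intro h k
    haveI : CharP F 2 := ringChar.of_eq h
    have h2 : (2 : F) = 0 := by exact_mod_cast CharP.cast_eq_zero F 2
    have hneg : (-1 : F) = 1 := by linear_combination -h2
    refine Submodule.mem_span_pair.mpr ⟨1, 1, ?_⟩
    funext j
    simp only [Pi.add_apply, Pi.smul_apply, one_smul, Pi.single_apply, moebiusQ_apply, hneg,
      one_pow]
    rcases lt_trichotomy j k with h' | h' | h'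
    · rw [if_pos h', if_neg (ne_of_lt h')]; ring
    · subst h'; simp
    · rw [if_neg (asymm h'), if_pos h', if_neg (ne_of_gt h')]; ring
  refine ⟨⟨?_, fun h => ⟨fun _ => 1, ?_, part2 h⟩⟩, part2⟩
  · rintro ⟨c, hc0, hmem⟩
    by_contra hchar
    have h2 : (2 : F) ≠ 0 := by
      intro h
      apply hchar
      haveI : CharP F (ringChar F) := ringChar.charP F
      have hdvd : ringChar F ∣ 2 := (CharP.cast_eq_zero_iff F (ringChar F) 2).mp (by
        exact_mod_cast h)
      rcases (Nat.prime_two.eq_one_or_self_of_dvd _ hdvd) with h1 | h1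
      · exact absurd h1 (CharP.char_ne_one F (ringChar F))
      · exact h1
    set i0 : Fin (n+1) := ⟨0, by omega⟩ with hi0def
    set i1 : Fin (n+1) := ⟨1, by omega⟩ with hi1def
    set i2 : Fin (n+1) := ⟨2, by omega⟩ with hi2def
    set iN : Fin (n+1) := ⟨n, by omega⟩ with hiNdef
    obtain ⟨a0, b0, h0⟩ := Submodule.mem_span_pair.mp (hmem i0)
    obtain ⟨a1, b1, h1⟩ := Submodule.mem_span_pair.mp (hmem i1)
    obtain ⟨aN, bN, hN⟩ := Submodule.mem_span_pair.mp (hmem iN)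
    have keyGT : ∀ (k j : Fin (n+1)) (a b : F),
        a • (Pi.single k (1:F) : Fin (n+1) → F) + b • moebiusQ F n k = c → k < j →
        b * (-1:F)^((j:ℕ)+(k:ℕ)) = c j := by
      intro k j a b h hkj
      have := congrFun h j
      rw [Pi.add_apply, Pi.smul_apply, Pi.smul_apply, moebiusQ_apply,
        if_neg (asymm hkj), if_pos hkj, Pi.single_apply, if_neg (ne_of_gt hkj)] at this
      simpa using this
    have keyLT : ∀ (k j : Fin (n+1)) (a b : F),
        a • (Pi.single k (1:F) : Fin (n+1) → F) + b • moebiusQ F n k = c → j < k →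
        b * (-1:F)^((j:ℕ)+(k:ℕ)+1) = c j := by
      intro k j a b h hjk
      have := congrFun h j
      rw [Pi.add_apply, Pi.smul_apply, Pi.smul_apply, moebiusQ_apply,
        if_pos hjk, Pi.single_apply, if_neg (ne_of_lt hjk)] at this
      simpa using this
    have hi01 : i0 < i1 := by rw [Fin.lt_def]; show 0 < 1; omega
    have hi02 : i0 < i2 := by rw [Fin.lt_def]; show 0 < 2; omega
    have hi12 : i1 < i2 := by rw [Fin.lt_def]; show 1 < 2; omega
    have hi0N : i0 < iN := by rw [Fin.lt_def]; show 0 < n; omega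
    have hi2N : i2 < iN := by rw [Fin.lt_def]; show 2 < n; omega
    have E2 : b0 * (-1:F)^((i2:ℕ)+(i0:ℕ)) = c i2 := keyGT i0 i2 a0 b0 h0 hi02
    have E3 : b1 * (-1:F)^((i0:ℕ)+(i1:ℕ)+1) = c i0 := keyLT i1 i0 a1 b1 h1 hi01
    have E4 : b1 * (-1:F)^((i2:ℕ)+(i1:ℕ)) = c i2 := keyGT i1 i2 a1 b1 h1 hi12
    have E5 : bN * (-1:F)^((i0:ℕ)+(iN:ℕ)+1) = c i0 := keyLT iN i0 aN bN hN hi0N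
    have E6 : bN * (-1:F)^((i2:ℕ)+(iN:ℕ)+1) = c i2 := keyLT iN i2 aN bN hN hi2N
    -- simplify exponents
    have hv0 : (i0:ℕ) = 0 := rfl
    have hv1 : (i1:ℕ) = 1 := rfl
    have hv2 : (i2:ℕ) = 2 := rfl
    have hvN : (iN:ℕ) = n := rfl
    rw [hv2, hv0] at E2; norm_num at E2
    rw [hv0, hv1] at E3; norm_num at E3
    rw [hv2, hv1] at E4; norm_num at E4
    rw [hv0, hvN] at E5
    rw [hv2, hvN] at E6
    have heN1 : Even (0 + n + 1) := by simpa using hodd.add_one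
    have heN3 : Even (2 + n + 1) := by
      obtain ⟨k, hk⟩ := hodd; exact ⟨k + 2, by omega⟩
    rw [heN1.neg_one_pow, mul_one] at E5
    rw [heN3.neg_one_pow, mul_one] at E6
    -- E3 : b1 = c i0, E4 : -b1 = c i2 (check forms after norm_num)
    have hci0 : c i0 = 0 := by
      have : (2:F) * c i0 = 0 := by linear_combination -E3 - E4 + E6 - E5
      rcases mul_eq_zero.mp this with h | h
      · exact absurd h h2
      · exact h
    have hci2 : c i2 = 0 := by rw [← E6, E5, hci0]
    have hb0 : b0 = 0 := E2.trans hci2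
    apply hc0
    funext j
    show c j = 0
    by_cases hj : j = i0
    · rw [hj]; exact hci0
    · have hlt : i0 < j := by
        rw [Fin.lt_def, hv0]
        have : (j : ℕ) ≠ 0 := fun h => hj (Fin.ext (h.trans hv0.symm))
        omega
      have := keyGT i0 j a0 b0 h0 hlt
      rw [hb0, zero_mul] at this
      exact this.symm
  · exact fun h => one_ne_zero ((by simpa using congrFun h ⟨0, by omega⟩) : (1:F) = 0)
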